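/- The Barnes-type Daehee polynomials of the second kind satisfy D̂_n(x|a_1,…,a_r) = ∑_{m=0}^n S_1(n,m) B_m(x+a_1+⋯+a_r|a_1,…,a_r), where S_1 are signed Stirling numbers of the first kind and B_m the Barnes multiple Bernoulli polynomials. -/

import Mathlib

open Finset PowerSeries

/-- Exponential generating function: `∑ f n * t^n / n!`. -/
noncomputable def egf (f : ℕ → ℚ) : PowerSeries ℚ :=
  PowerSeries.mk fun n => f n / n.factorial

/-- The formal power series `log(1+t) = ∑_{m≥1} (-1)^{m-1} t^m / m`. -/
noncomputable def log1p : PowerSeries ℚ :=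
  PowerSeries.mk fun n => if n = 0 then 0 else (-1) ^ (n - 1) / n

/-- Formal exponential composition: for `f` with zero constant term this is
`exp(f) = ∑_k f^k / k!` (the sum in each coefficient is finite). -/
noncomputable def expPS (f : PowerSeries ℚ) : PowerSeries ℚ :=
  PowerSeries.mk fun n =>
    ∑ k ∈ Finset.range (n + 1), (PowerSeries.coeff n (f ^ k)) / k.factorial

/-- `(1+t)^a := exp(a · log(1+t))` as a formal power series. -/
noncomputable def onePow (a : ℚ) : PowerSeries ℚ := expPS (PowerSeries.C a * log1p)

/-- `e^{a t} = ∑ a^n t^n / n!`. -/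
noncomputable def expAt (a : ℚ) : PowerSeries ℚ :=
  PowerSeries.mk fun n => a ^ n / n.factorial

/-- Falling factorial `(x)_n = x(x-1)⋯(x-n+1)`. -/
noncomputable def ffall (x : ℚ) (n : ℕ) : ℚ := ∏ i ∈ Finset.range n, (x - i)

/-!
Substituting `log(1+t)` into power series is a ring homomorphism sending `e^{at}` to `(1+t)^a`
and `t` to `log(1+t)`. Applied to the generating function identity for
`B_m(x + a_1 + ⋯ + a_r | a)`, and after cancelling the nonzero factor `∏ ((1+t)^{a_j} - 1)`, it
shows that the generating function of `D̂_n(x | a)` is `∑ B_m(x + ∑ a_j | a) log(1+t)^m / m!`.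
It remains to expand `log(1+t)^m / m! = ∑_n S_1(n,m) t^n / n!`. For natural `N`,
`[t^n] exp(N log(1+t)) = [t^n] (1+t)^N = (N)_n / n!`; both ends are polynomials in `N`, and
comparing their coefficients of `N^m` gives the expansion. The identity `exp(log(1+t)) = 1+t` holds
because both sides satisfy `(1+t) E' = E` with `E(0) = 1`.
-/

namespace PowerSeries

section CommRing

variable {A : Type*} [CommRing A] [Algebra ℚ A]

theorem coeff_log_pow_of_lt {n k : ℕ} (h : n < k) : coeff n (log A ^ k) = 0 :=
  X_pow_dvd_iff.mp (pow_dvd_pow_of_dvd (X_dvd_iff.mpr constantCoeff_log) k) n h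

theorem coeff_subst_log (f : A⟦X⟧) (n : ℕ) :
    coeff n (f.subst (log A)) = ∑ m ∈ range (n + 1), coeff m f * coeff n (log A ^ m) := by
  rw [coeff_subst' HasSubst.log, finsum_eq_sum_of_support_subset (s := range (n + 1))]
  · rfl
  · intro m hm
    rw [coe_range, Set.mem_Iio]
    by_contra! hnm
    exact hm (by simp [coeff_log_pow_of_lt hnm])

theorem derivative_log_mul_one_add_X : d⁄dX A (log A) * (1 + X) = 1 := by
  ext n
  rw [deriv_log, mul_add, mul_one, map_add]
  cases n with
  | zero => simp
  | succ n => simp [coeff_succ_mul_X, pow_succ, coeff_one]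

end CommRing

section Field

variable {K : Type*} [Field K] [Algebra ℚ K]

theorem derivative_log : d⁄dX K (log K) = (1 + X)⁻¹ :=
  (eq_inv_iff_mul_eq_one (by simp)).mpr derivative_log_mul_one_add_X

theorem exp_subst_log : (exp K).subst (log K) = 1 + X := by
  have : CharZero K := Algebra.charZero_of_charZero ℚ K
  set E := (exp K).subst (log K)
  have hunit : constantCoeff (1 + X : K⟦X⟧) ≠ 0 := by simp
  have hE : d⁄dX K E = E * (1 + X)⁻¹ := by
    rw [derivative_subst HasSubst.log, derivative_exp, derivative_log]
  have hE0 : constantCoeff E = 1 := by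
    rw [← coeff_zero_eq_constantCoeff_apply, coeff_subst_log]
    simp
  have hquot : E * (1 + X)⁻¹ = 1 := by
    apply derivative.ext
    · rw [Derivation.leibniz, derivative_inv', hE]
      simp only [smul_eq_mul, map_add, derivative_X, derivative_one]
      ring
    · simp [hE0]
  calc E = E * (1 + X)⁻¹ * (1 + X) := by rw [mul_assoc, PowerSeries.inv_mul_cancel _ hunit, mul_one]
    _ = 1 + X := by rw [hquot, one_mul]

end Field

end PowerSeries

open scoped Nat

theorem log1p_eq_log : log1p = log ℚ := by
  ext n
  rcases n with _ | n
  · simp [log1p]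
  · simp [log1p, pow_succ]

theorem expAt_eq_rescale (a : ℚ) : expAt a = rescale a (exp ℚ) := by
  ext n
  simp [expAt, coeff_rescale, div_eq_mul_inv]

theorem expAt_add (a b : ℚ) : expAt (a + b) = expAt a * expAt b := by
  simp only [expAt_eq_rescale, exp_mul_exp_eq_exp_add]

theorem expAt_sum {ι : Type*} (s : Finset ι) (a : ι → ℚ) :
    expAt (∑ i ∈ s, a i) = ∏ i ∈ s, expAt (a i) := by
  induction s using Finset.cons_induction with
  | empty => simp [expAt_eq_rescale, rescale_zero]
  | cons i s hi ih => rw [sum_cons, prod_cons, expAt_add, ih]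

theorem expAt_natCast (N : ℕ) : expAt N = exp ℚ ^ N := by
  rw [expAt_eq_rescale, exp_pow_eq_rescale_exp]

theorem coeff_onePow (a : ℚ) (n : ℕ) :
    coeff n (onePow a) = ∑ k ∈ range (n + 1), a ^ k / k ! * coeff n (log ℚ ^ k) := by
  simp only [onePow, expPS, coeff_mk, log1p_eq_log, mul_pow, ← map_pow, coeff_C_mul]
  exact sum_congr rfl fun k _ => by ring

theorem expAt_subst_log (a : ℚ) : (expAt a).subst (log ℚ) = onePow a := by
  ext n
  simp [coeff_subst_log, coeff_onePow, expAt]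

theorem onePow_natCast (N : ℕ) : onePow N = (1 + X) ^ N := by
  rw [← expAt_subst_log, expAt_natCast, subst_pow HasSubst.log, exp_subst_log]

theorem ffall_natCast (N n : ℕ) : ffall N n = N.descFactorial n := by
  rw [ffall, ← descPochhammer_eval_eq_prod_range, descPochhammer_eval_eq_descFactorial]

theorem coeff_onePow_natCast (N n : ℕ) : coeff n (onePow N) = ffall N n / n ! := by
  have hpoly : (1 + X : ℚ⟦X⟧) ^ N = ((1 + Polynomial.X) ^ N : Polynomial ℚ) := by push_cast; rfl
  rw [onePow_natCast, hpoly, Polynomial.coeff_coe, Polynomial.coeff_one_add_X_pow, ffall_natCast,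
    Nat.descFactorial_eq_factorial_mul_choose]
  push_cast
  field_simp

theorem coeff_one_onePow (b : ℚ) : coeff 1 (onePow b) = b := by
  simp [coeff_onePow, sum_range_succ]

theorem onePow_sub_one_ne_zero {b : ℚ} (hb : b ≠ 0) : onePow b - 1 ≠ 0 := by
  intro h
  exact hb (by simpa [coeff_one_onePow] using congrArg (coeff 1) h)

theorem eq_of_forall_sum_mul_natCast_pow_eq {R : Type*} [CommRing R] [IsDomain R] [CharZero R]
    {c d : ℕ → R} {n : ℕ}
    (h : ∀ N : ℕ, ∑ j ∈ range (n + 1), c j * N ^ j = ∑ j ∈ range (n + 1), d j * N ^ j)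
    {k : ℕ} (hk : k ≤ n) : c k = d k := by
  let poly (e : ℕ → R) : Polynomial R := ∑ j ∈ range (n + 1), Polynomial.C (e j) * Polynomial.X ^ j
  have hpoly : poly c = poly d := by
    apply Polynomial.eq_of_infinite_eval_eq
    refine (Set.infinite_range_of_injective Nat.cast_injective).mono ?_
    rintro _ ⟨N, rfl⟩
    simpa [poly, Polynomial.eval_finsetSum] using h N
  simpa [poly, Polynomial.finsetSum_coeff, Polynomial.coeff_C_mul_X_pow, Nat.lt_succ_iff.mpr hk]
    using congrArg (Polynomial.coeff · k) hpoly

theorem coeff_log_pow_div_factorial {n : ℕ} {s : ℕ → ℚ}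
    (hs : ∀ x : ℚ, ffall x n = ∑ j ∈ range (n + 1), s j * x ^ j) {k : ℕ} (hk : k ≤ n) :
    coeff n (log ℚ ^ k) / k ! = s k / n ! := by
  refine eq_of_forall_sum_mul_natCast_pow_eq (c := fun j => coeff n (log ℚ ^ j) / j !)
    (d := fun j => s j / n !) (fun N => ?_) hk
  calc ∑ j ∈ range (n + 1), coeff n (log ℚ ^ j) / j ! * N ^ j
      = coeff n (onePow N) := by
        rw [coeff_onePow]
        exact sum_congr rfl fun j _ => by ring
    _ = ffall N n / n ! := coeff_onePow_natCast N n
    _ = ∑ j ∈ range (n + 1), s j / n ! * N ^ j := by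
        rw [hs, sum_div]
        exact sum_congr rfl fun j _ => by ring

theorem egf_injective : Function.Injective egf := by
  intro f g h
  funext n
  have hn := congrArg (coeff n) h
  simp only [egf, coeff_mk] at hn
  exact (div_left_inj' (by positivity)).mp hn

theorem egf_subst_log {S1 : ℕ → ℕ → ℚ}
    (hS1 : ∀ (l : ℕ) (x : ℚ), ffall x l = ∑ j ∈ range (l + 1), S1 l j * x ^ j) (f : ℕ → ℚ) :
    (egf f).subst (log ℚ) = egf fun n => ∑ m ∈ range (n + 1), S1 n m * f m := by
  ext n
  simp only [coeff_subst_log, egf, coeff_mk, sum_div]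
  refine sum_congr rfl fun m hm => ?_
  rw [mul_div_right_comm, ← coeff_log_pow_div_factorial (hS1 n) (mem_range_succ_iff.mp hm)]
  ring

theorem stmt2 (r : ℕ) (a : Fin r → ℚ) (ha : ∀ j, a j ≠ 0) (Dh : ℕ → ℚ → ℚ)
    (hDh : ∀ x : ℚ, (∏ j, (onePow (a j) - 1)) * egf (fun n => Dh n x) = (∏ j, onePow (a j)) * log1p ^ r * onePow x)
    (B : ℕ → ℚ → ℚ) (hB : ∀ x : ℚ, (∏ j, (expAt (a j) - 1)) * egf (fun n => B n x) = (PowerSeries.X : PowerSeries ℚ) ^ r * expAt x)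
    (S1 : ℕ → ℕ → ℚ) (hS1 : ∀ (l : ℕ) (x : ℚ), ffall x l = ∑ j ∈ Finset.range (l + 1), S1 l j * x ^ j)
    (n : ℕ) (x : ℚ) :
    Dh n x = ∑ m ∈ Finset.range (n + 1), S1 n m * B m (x + ∑ j, a j) := by
  have hBsubst := congrArg (substAlgHom (HasSubst.log (A := ℚ))) (hB (x + ∑ j, a j))
  simp only [map_mul, map_prod, map_sub, map_one, map_pow, coe_substAlgHom, subst_X HasSubst.log,
    expAt_add, expAt_sum, expAt_subst_log, egf_subst_log hS1] at hBsubst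
  have hprod : ∏ j, (onePow (a j) - 1) ≠ 0 :=
    prod_ne_zero_iff.mpr fun j _ => onePow_sub_one_ne_zero (ha j)
  have hegf := mul_left_cancel₀ hprod ((hDh x).trans (by rw [hBsubst, log1p_eq_log]; ring))
  exact congrFun (egf_injective hegf) n
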